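/- arXiv:1603.08044 — 2 statements merged into one kernel-verified Lean document; each statement's English description precedes it below -/
import Mathlib

section
/- Let f be a derivation of N. Then: (i) for every A ∈ N^{12} and all indices r, s, the entry f(A) r s is zero unless b r = 1, or (b r, b s) = (2, t), or (b r, b s) = (3, t); and (ii) for every A ∈ N^{t−1,t} and all indices r, s, the entry f(A) r s is zero unless b s = t, or (b r, b s) = (1, t−1), or (b r, b s) = (1, t−2). -/
/-- `A` is a strictly block upper triangular matrix relative to the block function `b`
(index `r` lies in block `b r`): `A r s = 0` whenever `b r ≥ b s`. -/
def InN {F : Type*} [Field F] {n : ℕ} (b : Fin n → ℕ)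
    (A : Matrix (Fin n) (Fin n) F) : Prop :=
  ∀ r s, b s ≤ b r → A r s = 0

/-- `A` lies in the `(i,j)` block `N^{ij}`: `A r s = 0` unless `b r = i` and `b s = j`. -/
def InBlk {F : Type*} [Field F] {n : ℕ} (b : Fin n → ℕ) (i j : ℕ)
    (A : Matrix (Fin n) (Fin n) F) : Prop :=
  ∀ r s, ¬(b r = i ∧ b s = j) → A r s = 0

/-- `f` is a derivation of the Lie algebra `N` of strictly block upper triangular matrices:
it maps `N` into `N` and satisfies `f [X,Y] = [f X, Y] + [X, f Y]` on `N`,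
where `[X,Y] = XY - YX`. -/
def IsDerN {F : Type*} [Field F] {n : ℕ} (b : Fin n → ℕ)
    (f : Matrix (Fin n) (Fin n) F →ₗ[F] Matrix (Fin n) (Fin n) F) : Prop :=
  (∀ A, InN b A → InN b (f A)) ∧
  ∀ X Y, InN b X → InN b Y →
    f (X * Y - Y * X) = (f X * Y - Y * f X) + (X * f Y - f Y * X)

/-!
If `X ∈ N` commutes with `A`, applying the derivation `f` to `[A, X] = 0` gives
`[f A, X] = [f X, A]`. For `A ∈ N^{12}` (resp. `A ∈ N^{t-1,t}`) and `X` an elementary matrix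
`E_{pq}` avoiding the blocks that meet `A`, the right-hand side vanishes outside the first block
row (resp. the last block column), because `N` annihilates `A` from the left (resp. right). An
entry `(f A)_{rs}` is then isolated by taking `X = E_{pr}` with `p` one block above `r`, or
`X = E_{sq}` with `q` one block after `s`; the exceptional blocks of the statement are those where
neither choice of `X` commutes with `A`.
-/

open Matrix

section BlockMatrices

variable {F : Type*} [Field F] {n : ℕ} {b : Fin n → ℕ} {i j : ℕ}

theorem InBlk.inN {A : Matrix (Fin n) (Fin n) F} (hA : InBlk b i j A) (hij : i < j) :
    InN b A :=
  fun r s hsr => hA r s fun h => by omega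

theorem inN_single {p q : Fin n} (hpq : b p < b q) (c : F) : InN b (single p q c) := by
  intro r s hsr
  rw [single_apply_of_ne]
  rintro ⟨rfl, rfl⟩
  omega

theorem InBlk.mul_apply_eq_zero_of_row_ne {A : Matrix (Fin n) (Fin n) F} (hA : InBlk b i j A)
    {r : Fin n} (hr : b r ≠ i) (C : Matrix (Fin n) (Fin n) F) (s : Fin n) :
    (A * C) r s = 0 :=
  (mul_apply ..).trans <| Finset.sum_eq_zero fun k _ => by rw [hA r k fun h => hr h.1, zero_mul]

theorem InBlk.mul_left_apply_eq_zero_of_col_ne {A : Matrix (Fin n) (Fin n) F}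
    (hA : InBlk b i j A) {s : Fin n} (hs : b s ≠ j) (C : Matrix (Fin n) (Fin n) F) (r : Fin n) :
    (C * A) r s = 0 :=
  (mul_apply ..).trans <| Finset.sum_eq_zero fun k _ => by rw [hA k s fun h => hs h.2, mul_zero]

theorem InN.mul_inBlk_eq_zero (hi : ∀ r, i ≤ b r) {A C : Matrix (Fin n) (Fin n) F}
    (hC : InN b C) (hA : InBlk b i j A) : C * A = 0 := by
  ext u v
  rw [mul_apply, Matrix.zero_apply]
  refine Finset.sum_eq_zero fun k _ => ?_
  by_cases hk : b k = i ∧ b v = j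
  · rw [hC u k (hk.1 ▸ hi u), zero_mul]
  · rw [hA k v hk, mul_zero]

theorem InBlk.mul_inN_eq_zero (hj : ∀ r, b r ≤ j) {A C : Matrix (Fin n) (Fin n) F}
    (hA : InBlk b i j A) (hC : InN b C) : A * C = 0 := by
  ext u v
  rw [mul_apply, Matrix.zero_apply]
  refine Finset.sum_eq_zero fun k _ => ?_
  by_cases hk : b u = i ∧ b k = j
  · rw [hC k v (hk.2 ▸ hj v), mul_zero]
  · rw [hA u k hk, zero_mul]

theorem InBlk.commute_single {A : Matrix (Fin n) (Fin n) F} (hA : InBlk b i j A)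
    {p q : Fin n} (hp : b p ≠ j) (hq : b q ≠ i) (c : F) : Commute A (single p q c) := by
  have hAE : A * single p q c = 0 := by
    ext u v
    by_cases hv : v = q
    · subst hv
      rw [mul_single_apply_same, hA u p fun h => hp h.2, zero_mul, Matrix.zero_apply]
    · rw [mul_single_apply_of_ne _ _ _ _ _ hv, Matrix.zero_apply]
  have hEA : single p q c * A = 0 := by
    ext u v
    by_cases hu : u = p
    · subst hu
      rw [single_mul_apply_same, hA q v fun h => hq h.1, mul_zero, Matrix.zero_apply]
    · rw [single_mul_apply_of_ne _ _ _ _ _ hu, Matrix.zero_apply]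
  exact hAE.trans hEA.symm

end BlockMatrices

section Commutators

variable {F : Type*} [Field F] {n : ℕ}

theorem apply_eq_zero_of_commutator_single_apply_row {B : Matrix (Fin n) (Fin n) F}
    {p q s : Fin n} (h : (B * single p q (1 : F) - single p q (1 : F) * B) p s = 0) (hs : s ≠ q) :
    B q s = 0 := by
  rwa [Matrix.sub_apply, mul_single_apply_of_ne _ _ _ _ _ hs, single_mul_apply_same, one_mul,
    zero_sub, neg_eq_zero] at h

theorem apply_eq_zero_of_commutator_single_apply_col {B : Matrix (Fin n) (Fin n) F}
    {p q r : Fin n} (h : (B * single p q (1 : F) - single p q (1 : F) * B) r q = 0) (hr : r ≠ p) :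
    B r p = 0 := by
  rwa [Matrix.sub_apply, mul_single_apply_same, single_mul_apply_of_ne _ _ _ _ _ hr, mul_one,
    sub_zero] at h

end Commutators

namespace IsDerN

variable {F : Type*} [Field F] {n t : ℕ} {b : Fin n → ℕ}
  {f : Matrix (Fin n) (Fin n) F →ₗ[F] Matrix (Fin n) (Fin n) F}

theorem commutator_eq_of_commute (hf : IsDerN b f) {X Y : Matrix (Fin n) (Fin n) F}
    (hX : InN b X) (hY : InN b Y) (hXY : Commute X Y) :
    f X * Y - Y * f X = f Y * X - X * f Y := by
  have h := hf.2 X Y hX hY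
  rw [hXY.eq, sub_self, map_zero] at h
  rw [← neg_sub (X * f Y)]
  exact eq_neg_of_add_eq_zero_left h.symm

theorem commutator_single_apply_eq_zero_of_inBlk_one_two (hf : IsDerN b f)
    (hlb : ∀ r, 1 ≤ b r) {A : Matrix (Fin n) (Fin n) F} (hA : InBlk b 1 2 A) {p q : Fin n}
    (hpq : b p < b q) (hp : b p ≠ 2) (hq : b q ≠ 1) {r : Fin n} (hr : b r ≠ 1) (s : Fin n) :
    (f A * single p q (1 : F) - single p q (1 : F) * f A) r s = 0 := by
  have hE := inN_single (F := F) hpq 1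
  rw [hf.commutator_eq_of_commute (hA.inN one_lt_two) hE (hA.commute_single hp hq 1),
    (hf.1 _ hE).mul_inBlk_eq_zero hlb hA, zero_sub, Matrix.neg_apply,
    hA.mul_apply_eq_zero_of_row_ne hr, neg_zero]

theorem commutator_single_apply_eq_zero_of_inBlk_last (hf : IsDerN b f) (hub : ∀ r, b r ≤ t)
    {A : Matrix (Fin n) (Fin n) F} (hA : InBlk b (t - 1) t A) {p q : Fin n} (hpq : b p < b q)
    (hp : b p ≠ t) (hq : b q ≠ t - 1) (r : Fin n) {s : Fin n} (hs : b s ≠ t) :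
    (f A * single p q (1 : F) - single p q (1 : F) * f A) r s = 0 := by
  have hE := inN_single (F := F) hpq 1
  have hAN : InN b A := hA.inN (by have := hub p; omega)
  rw [hf.commutator_eq_of_commute hAN hE (hA.commute_single hp hq 1),
    hA.mul_inN_eq_zero hub (hf.1 _ hE), Matrix.sub_apply, hA.mul_left_apply_eq_zero_of_col_ne hs,
    Matrix.zero_apply, sub_zero]

theorem apply_inBlk_one_two_eq_zero (hf : IsDerN b f) (hlb : ∀ r, 1 ≤ b r)
    (hub : ∀ r, b r ≤ t) (hsurj : ∀ k, 1 ≤ k → k ≤ t → ∃ r, b r = k)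
    {A : Matrix (Fin n) (Fin n) F} (hA : InBlk b 1 2 A) {r s : Fin n} (hr1 : b r ≠ 1)
    (hr2 : ¬(b r = 2 ∧ b s = t)) (hr3 : ¬(b r = 3 ∧ b s = t)) : f A r s = 0 := by
  have hr := hub r
  have hs := hub s
  have hr0 := hlb r
  rcases le_or_gt (b s) (b r) with hsr | hrs
  · exact hf.1 A (hA.inN one_lt_two) r s hsr
  by_cases hr4 : 4 ≤ b r
  · obtain ⟨p, hp⟩ := hsurj 3 (by omega) (by omega)
    exact apply_eq_zero_of_commutator_single_apply_row
      (hf.commutator_single_apply_eq_zero_of_inBlk_one_two hlb hA (p := p) (q := r)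
        (by omega) (by omega) (by omega) (by omega) s)
      (by rintro rfl; omega)
  · obtain ⟨q, hq⟩ := hsurj (b s + 1) (by omega) (by omega)
    exact apply_eq_zero_of_commutator_single_apply_col
      (hf.commutator_single_apply_eq_zero_of_inBlk_one_two hlb hA (p := s) (q := q)
        (by omega) (by omega) (by omega) hr1 q)
      (by rintro rfl; omega)

theorem apply_inBlk_last_eq_zero (hf : IsDerN b f) (hlb : ∀ r, 1 ≤ b r) (hub : ∀ r, b r ≤ t)
    (hsurj : ∀ k, 1 ≤ k → k ≤ t → ∃ r, b r = k)
    {A : Matrix (Fin n) (Fin n) F} (hA : InBlk b (t - 1) t A) {r s : Fin n} (hst : b s ≠ t)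
    (h1 : ¬(b r = 1 ∧ b s = t - 1)) (h2 : ¬(b r = 1 ∧ b s = t - 2)) : f A r s = 0 := by
  have hr := hlb r
  have hs := hub s
  rcases le_or_gt (b s) (b r) with hsr | hrs
  · exact hf.1 A (hA.inN (by omega)) r s hsr
  by_cases hr1 : b r = 1
  · obtain ⟨q, hq⟩ := hsurj (b s + 1) (by omega) (by omega)
    exact apply_eq_zero_of_commutator_single_apply_col
      (hf.commutator_single_apply_eq_zero_of_inBlk_last hub hA (p := s) (q := q)
        (by omega) hst (by omega) r (by omega))
      (by rintro rfl; omega)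
  · obtain ⟨p, hp⟩ := hsurj (b r - 1) (by omega) (by omega)
    exact apply_eq_zero_of_commutator_single_apply_row
      (hf.commutator_single_apply_eq_zero_of_inBlk_last hub hA (p := p) (q := r)
        (by omega) (by omega) (by omega) p hst)
      (by rintro rfl; omega)

end IsDerN

theorem stmt5_general {F : Type*} [Field F] {n t : ℕ} (b : Fin n → ℕ)
    (hlb : ∀ r, 1 ≤ b r) (hub : ∀ r, b r ≤ t)
    (hsurj : ∀ k, 1 ≤ k → k ≤ t → ∃ r, b r = k)
    (f : Matrix (Fin n) (Fin n) F →ₗ[F] Matrix (Fin n) (Fin n) F)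
    (hf : IsDerN b f) :
    (∀ A, InBlk b 1 2 A → ∀ r s,
      ¬(b r = 1) → ¬(b r = 2 ∧ b s = t) → ¬(b r = 3 ∧ b s = t) →
      f A r s = 0) ∧
    (∀ A, InBlk b (t - 1) t A → ∀ r s,
      ¬(b s = t) → ¬(b r = 1 ∧ b s = t - 1) → ¬(b r = 1 ∧ b s = t - 2) →
      f A r s = 0) :=
  ⟨fun _ hA _ _ hr1 hr2 hr3 => hf.apply_inBlk_one_two_eq_zero hlb hub hsurj hA hr1 hr2 hr3,
    fun _ hA _ _ hst h1 h2 => hf.apply_inBlk_last_eq_zero hlb hub hsurj hA hst h1 h2⟩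

/-- for a derivation `f` of `N`: (i) `f(N^{12})` lies on the first block row,
the `(2,t)` block and the `(3,t)` block; (ii) `f(N^{t-1,t})` lies on the last block column,
the `(1,t-1)` block and the `(1,t-2)` block. -/
theorem stmt5 {F : Type*} [Field F] {n t : ℕ} (b : Fin n → ℕ)
    (hn : 1 ≤ n) (ht : 3 ≤ t) (hmono : Monotone b)
    (hlb : ∀ r, 1 ≤ b r) (hub : ∀ r, b r ≤ t)
    (hsurj : ∀ k, 1 ≤ k → k ≤ t → ∃ r, b r = k)
    (f : Matrix (Fin n) (Fin n) F →ₗ[F] Matrix (Fin n) (Fin n) F)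
    (hf : IsDerN b f) :
    (∀ A, InBlk b 1 2 A → ∀ r s,
      ¬(b r = 1) → ¬(b r = 2 ∧ b s = t) → ¬(b r = 3 ∧ b s = t) →
      f A r s = 0) ∧
    (∀ A, InBlk b (t - 1) t A → ∀ r s,
      ¬(b s = t) → ¬(b r = 1 ∧ b s = t - 1) → ¬(b r = 1 ∧ b s = t - 2) →
      f A r s = 0) :=
  stmt5_general b hlb hub hsurj f hf
end

section
/- Assume char F ≠ 2 and let f be a derivation of N. Then there exist: (1) a block upper triangular matrix X (an n×n matrix with X r s = 0 whenever b r > b s); (2) an F-linear map φ : N → N whose image is contained in N^{1t} and which vanishes on every N^{ij} with j > i+1; (3) a derivation φ₁ of N with φ₁(N^{12}) ⊆ N^{2t}, φ₁(N^{ij}) = 0 for every (i,j) ≠ (1,2), and φ₁ = 0 unless block 1 consists of a single index (#{r : b r = 1} = 1); (4) a derivation φ₂ of N with φ₂(N^{t−1,t}) ⊆ N^{1,t−1}, φ₂(N^{ij}) = 0 for every (i,j) ≠ (t−1,t), and φ₂ = 0 unless block t consists of a single index (#{s : b s = t} = 1); such that f(A) = X·A − A·X + φ(A) + φ₁(A)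 + φ₂(A) for all A ∈ N. -/
/-!
Write `E r s = single r s 1` for the matrix units spanning `N`. The derivation identity applied to
pairs of matrix units gives linear relations among the coefficients `f (E r s) p q`. The rows and
columns through an index `u` of block `1` and an index `v` of block `t` determine a matrix `X`
with `f (E r s) p q = (ad X (E r s)) p q`, except in three configurations: `(p, q)` in the block
`(1, t)` and `b s = b r + 1` (this gives `φ`); `r` alone in block `1`, `s` and `p` in block `2`,
`q` in block `t` (this gives `φ₁`); and the mirror image of the latter (this gives `φ₂`).
Everywhere else the coefficient vanishes: an index outside `{r, s}` lies below row `p` or above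
column `q`, or `E r s` factors through a middle block, or two relations combine to `2 c = 0`,
which is where `char F ≠ 2` enters. Finally `φ₁ = π₂ₜ ∘ f ∘ π₁₂` is a derivation because any two
matrices supported in the block `(1, 2)` commute, and symmetrically for `φ₂`.
-/

section BlockDerivations

open Matrix

section SingleMul

variable {ι R : Type*} [Fintype ι] [DecidableEq ι] [Semiring R]

theorem mul_single_one_apply (M : Matrix ι ι R) (u v p q : ι) :
    (M * single u v (1 : R)) p q = if q = v then M p u else 0 := by
  split_ifs with h
  · subst h; simp
  · exact mul_single_apply_of_ne _ _ _ _ _ h M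

theorem single_one_mul_apply (M : Matrix ι ι R) (u v p q : ι) :
    (single u v (1 : R) * M) p q = if p = u then M v q else 0 := by
  split_ifs with h
  · subst h; simp
  · exact single_mul_apply_of_ne _ _ _ _ _ h M

theorem single_one_mul_single_one (r s u v : ι) :
    single r s (1 : R) * single u v 1 = if s = u then single r v 1 else 0 := by
  split_ifs with h
  · subst h; simp
  · exact single_mul_single_of_ne _ _ _ _ h _

end SingleMul

structure IsBlockLabelling {n : ℕ} (b : Fin n → ℕ) (t : ℕ) : Prop where
  one_le : ∀ r, 1 ≤ b r
  le : ∀ r, b r ≤ t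
  exists_eq : ∀ k, 1 ≤ k → k ≤ t → ∃ r, b r = k

variable {F : Type*} [Field F] {n : ℕ} {b : Fin n → ℕ}

theorem inN_single_s15 {r s : Fin n} (h : b r < b s) : InN b (single r s (1 : F)) :=
  fun p q hpq => single_apply_of_ne _ _ _ _ _ (by rintro ⟨rfl, rfl⟩; omega)

theorem IsBlockLabelling.eq_or_eq_of_forall {t : ℕ} (hb : IsBlockLabelling b t) {r s : Fin n}
    {P : ℕ → Prop} (h : ∀ w, P (b w) → w ≠ r → w = s) {k : ℕ} (hk : 1 ≤ k) (hkt : k ≤ t)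
    (hPk : P k) : b r = k ∨ b s = k := by
  obtain ⟨w, rfl⟩ := hb.exists_eq k hk hkt
  obtain rfl | hwr := eq_or_ne w r
  · exact Or.inl rfl
  · exact Or.inr (congrArg b (h w hPk hwr)).symm

theorem card_filter_eq_one_of_forall_eq {k : ℕ} {r : Fin n} (hr : b r = k)
    (h : ∀ x, b x = k → x = r) : (Finset.univ.filter fun x => b x = k).card = 1 :=
  Finset.card_eq_one.mpr ⟨r, by ext x; simpa using ⟨h x, fun e => e ▸ hr⟩⟩

namespace IsDerN

variable {f : Matrix (Fin n) (Fin n) F →ₗ[F] Matrix (Fin n) (Fin n) F} {t : ℕ}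

theorem apply_single_eq_zero_of_le (hf : IsDerN b f) {r s p q : Fin n} (hrs : b r < b s)
    (h : b q ≤ b p) : f (single r s 1) p q = 0 :=
  hf.1 _ (inN_single_s15 hrs) p q h

theorem bracket_single_apply (hf : IsDerN b f) {r s u v : Fin n} (hrs : b r < b s)
    (huv : b u < b v) (p q : Fin n) :
    (if s = u then f (single r v 1) p q else 0) - (if v = r then f (single u s 1) p q else 0) =
      ((if q = v then f (single r s 1) p u else 0) - (if p = u then f (single r s 1) v q else 0)) +
      ((if p = r then f (single u v 1) s q else 0) -
        (if q = s then f (single u v 1) p r else 0)) := by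
  have h := congrArg (· p q) (hf.2 _ _ (inN_single_s15 hrs) (inN_single_s15 huv))
  simpa only [single_one_mul_single_one, map_sub, apply_ite f, map_zero, Matrix.sub_apply,
    Matrix.add_apply, mul_single_one_apply, single_one_mul_apply,
    apply_ite (fun M : Matrix (Fin n) (Fin n) F => M p q), Matrix.zero_apply] using h

/-- `E u v = [E u m, E m v]`. -/
theorem apply_single_of_lt_of_lt (hf : IsDerN b f) {u m v : Fin n} (hum : b u < b m)
    (hmv : b m < b v) (p q : Fin n) :
    f (single u v 1) p q =
      ((if q = v then f (single u m 1) p m else 0) - (if p = m then f (single u m 1) v q else 0)) +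
      ((if p = u then f (single m v 1) m q else 0) -
        (if q = m then f (single m v 1) p u else 0)) := by
  have h := hf.bracket_single_apply hum hmv p q
  rwa [if_pos rfl, if_neg (ne_of_apply_ne b (by omega)), sub_zero] at h

theorem apply_single_row_symm (hf : IsDerN b f) {r s v : Fin n} (hrs : b r < b s)
    (hrv : b r < b v) (q : Fin n) : f (single r s 1) v q = f (single r v 1) s q := by
  have h := hf.bracket_single_apply hrs hrv r q
  rw [if_neg (ne_of_apply_ne b (by omega)), if_neg (ne_of_apply_ne b (by omega)), if_pos rfl,
    if_pos rfl, hf.apply_single_eq_zero_of_le hrs le_rfl, ite_self,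
    hf.apply_single_eq_zero_of_le hrv le_rfl, ite_self] at h
  linear_combination h

theorem apply_single_col_symm (hf : IsDerN b f) {r s u : Fin n} (hrs : b r < b s)
    (hus : b u < b s) (p : Fin n) : f (single r s 1) p u = f (single u s 1) p r := by
  have h := hf.bracket_single_apply hrs hus p s
  rw [if_neg (ne_of_apply_ne b (by omega)), if_neg (ne_of_apply_ne b (by omega)), if_pos rfl,
    if_pos rfl, hf.apply_single_eq_zero_of_le hrs le_rfl, ite_self,
    hf.apply_single_eq_zero_of_le hus le_rfl, ite_self] at h
  linear_combination -h

theorem apply_single_row_eq (hf : IsDerN b f) {w u v q : Fin n} (hwu : b w < b u)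
    (huv : b u < b v) (hqv : q ≠ v) : f (single w v 1) w q = f (single u v 1) u q := by
  have h := hf.apply_single_of_lt_of_lt hwu huv w q
  rw [if_neg hqv, if_neg (ne_of_apply_ne b hwu.ne), if_pos rfl,
    hf.apply_single_eq_zero_of_le huv (le_refl (b w)), ite_self] at h
  linear_combination h

theorem apply_single_col_eq (hf : IsDerN b f) {u m v p : Fin n} (hum : b u < b m)
    (hmv : b m < b v) (hpu : p ≠ u) : f (single u v 1) p v = f (single u m 1) p m := by
  have h := hf.apply_single_of_lt_of_lt hum hmv p v
  rw [if_pos rfl, if_neg hpu, if_neg (ne_of_apply_ne b hmv.ne'),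
    hf.apply_single_eq_zero_of_le hum (le_refl (b v)), ite_self] at h
  linear_combination h

theorem apply_single_row_eq_neg (hf : IsDerN b f) {u v q x : Fin n} (huv : b u < b v)
    (huq : b u < b q) (hqv : q ≠ v) (hqx : b q < b x) :
    f (single u v 1) u q = -f (single q x 1) v x := by
  have h := hf.bracket_single_apply huv hqx u x
  rw [if_neg hqv.symm, if_neg (ne_of_apply_ne b (by omega)), if_pos rfl,
    if_neg (ne_of_apply_ne b huq.ne), if_pos rfl, hf.apply_single_eq_zero_of_le hqx (le_refl (b u)),
    ite_self] at h
  linear_combination -h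

theorem apply_single_col_eq_neg (hf : IsDerN b f) {u s w p : Fin n} (hus : b u < b s)
    (hwp : b w < b p) (hsw : s ≠ w) (hpu : p ≠ u) (hps : p ≠ s) :
    f (single u s 1) p s = -f (single w p 1) w u := by
  have h := hf.bracket_single_apply hus hwp w s
  rw [if_neg hsw, if_neg hpu, if_neg hps.symm, if_pos rfl, if_pos rfl,
    hf.apply_single_eq_zero_of_le hwp (le_refl (b s)), ite_self] at h
  linear_combination h

theorem apply_single_diag_eq_add (hf : IsDerN b f) {u m v : Fin n} (hum : b u < b m)
    (hmv : b m < b v) :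
    f (single u v 1) u v = f (single u m 1) u m + f (single m v 1) m v := by
  have h := hf.apply_single_of_lt_of_lt hum hmv u v
  rw [if_pos rfl, if_neg (ne_of_apply_ne b hum.ne), if_pos rfl,
    if_neg (ne_of_apply_ne b hmv.ne')] at h
  linear_combination h

theorem apply_single_eq_zero_of_between (hf : IsDerN b f) {r m s p q : Fin n} (hrm : b r < b m)
    (hms : b m < b s) (hpr : p ≠ r) (hpm : p ≠ m) (hqs : q ≠ s) (hqm : q ≠ m) :
    f (single r s 1) p q = 0 := by
  have h := hf.apply_single_of_lt_of_lt hrm hms p q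
  rw [if_neg hqs, if_neg hpm, if_neg hpr, if_neg hqm] at h
  simpa using h

theorem apply_single_eq_zero_of_below (hf : IsDerN b f) {u v w p q : Fin n} (huv : b u < b v)
    (hwp : b w < b p) (hwu : w ≠ u) (hwv : w ≠ v) (hpu : p ≠ u) (hqv : q ≠ v) :
    f (single u v 1) p q = 0 := by
  have h := hf.bracket_single_apply huv hwp w q
  rw [if_neg hwv.symm, if_neg hpu, if_pos rfl, if_neg hwu, if_neg hqv,
    hf.apply_single_eq_zero_of_le huv (le_refl (b w)), ite_self] at h
  linear_combination h

theorem apply_single_eq_zero_of_above (hf : IsDerN b f) {u v x p q : Fin n} (huv : b u < b v)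
    (hqx : b q < b x) (hxu : x ≠ u) (hxv : x ≠ v) (hpu : p ≠ u) (hqv : q ≠ v) (hpq : p ≠ q) :
    f (single u v 1) p q = 0 := by
  have h := hf.bracket_single_apply huv hqx p x
  rw [if_neg hqv.symm, if_neg hxu, if_pos rfl, if_neg hpq, if_neg hpu, if_neg hxv] at h
  linear_combination -h

theorem apply_single_eq_zero_of_lt_row (hf : IsDerN b f) (h2 : (2 : F) ≠ 0) {r s p q : Fin n}
    (hrs : b r < b s) (hsp : b s < b p) (hqp : q ≠ p) (hqs : q ≠ s) :
    f (single r s 1) p q = 0 := by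
  have e1 := hf.apply_single_row_symm hrs (hrs.trans hsp) q
  have e2 := hf.apply_single_of_lt_of_lt hrs hsp s q
  rw [if_neg hqp, if_pos rfl, if_neg (ne_of_apply_ne b hrs.ne'), if_neg hqs] at e2
  have h : 2 * f (single r s 1) p q = 0 := by linear_combination e1 + e2
  simpa [h2] using h

theorem apply_single_eq_zero_of_col_lt (hf : IsDerN b f) (h2 : (2 : F) ≠ 0) {r s p q : Fin n}
    (hrs : b r < b s) (hqr : b q < b r) (hpq : p ≠ q) (hpr : p ≠ r) :
    f (single r s 1) p q = 0 := by
  have e1 := hf.apply_single_col_symm hrs (hqr.trans hrs) p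
  have e2 := hf.apply_single_of_lt_of_lt hqr hrs p r
  rw [if_neg (ne_of_apply_ne b hrs.ne), if_neg hpr, if_neg hpq, if_pos rfl] at e2
  have h : 2 * f (single r s 1) p q = 0 := by linear_combination e1 + e2
  simpa [h2] using h

theorem apply_single_eq_zero_of_row_between (hf : IsDerN b f) (h2 : (2 : F) ≠ 0)
    {r s p q : Fin n} (hrp : b r < b p) (hps : b p < b s) (hqp : q ≠ p) (hqs : q ≠ s) :
    f (single r s 1) p q = 0 := by
  have h := hf.apply_single_of_lt_of_lt hrp hps p q
  rw [if_neg hqs, if_pos rfl, if_neg (ne_of_apply_ne b hrp.ne'), if_neg hqp,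
    hf.apply_single_eq_zero_of_lt_row h2 hrp hps hqs hqp] at h
  simpa using h

theorem apply_single_eq_zero_of_col_between (hf : IsDerN b f) (h2 : (2 : F) ≠ 0)
    {r s p q : Fin n} (hrq : b r < b q) (hqs : b q < b s) (hpr : p ≠ r) (hpq : p ≠ q) :
    f (single r s 1) p q = 0 := by
  have h := hf.apply_single_of_lt_of_lt hrq hqs p q
  rw [if_neg (ne_of_apply_ne b hqs.ne), if_neg hpq, if_neg hpr, if_pos rfl,
    hf.apply_single_eq_zero_of_col_lt h2 hqs hrq hpr hpq] at h
  simpa using h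

theorem apply_single_eq_zero_of_lt_or_between (hf : IsDerN b f) (h2 : (2 : F) ≠ 0) {r s p q : Fin n}
    (hrs : b r < b s) (hpr : p ≠ r) (hqs : q ≠ s) (hpq : b p < b q)
    (h : b s < b p ∨ b r < b p ∧ b p < b s ∨ b q < b r ∨ b r < b q ∧ b q < b s) :
    f (single r s 1) p q = 0 := by
  have hqp : q ≠ p := ne_of_apply_ne b hpq.ne'
  rcases h with hsp | ⟨hrp, hps⟩ | hqr | ⟨hrq, hqs'⟩
  · exact hf.apply_single_eq_zero_of_lt_row h2 hrs hsp hqp hqs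
  · exact hf.apply_single_eq_zero_of_row_between h2 hrp hps hqp hqs
  · exact hf.apply_single_eq_zero_of_col_lt h2 hrs hqr hqp.symm hpr
  · exact hf.apply_single_eq_zero_of_col_between h2 hrq hqs' hpr hqp.symm

theorem apply_single_eq_zero_of_ne (hf : IsDerN b f) (hb : IsBlockLabelling b t) (ht : 3 ≤ t)
    (h2 : (2 : F) ≠ 0) {r s p q : Fin n} (hrs : b r < b s) (hpr : p ≠ r) (hqs : q ≠ s)
    (hcentral : b p = 1 → b q = t → b r + 1 < b s)
    (hfirst : ¬((Finset.univ.filter fun x => b x = 1).card = 1 ∧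
      b r = 1 ∧ b s = 2 ∧ b p = 2 ∧ b q = t))
    (hlast : ¬((Finset.univ.filter fun x => b x = t).card = 1 ∧
      b r = t - 1 ∧ b s = t ∧ b p = 1 ∧ b q = t - 1)) :
    f (single r s 1) p q = 0 := by
  rcases le_or_gt (b q) (b p) with hqp | hpq
  · exact hf.apply_single_eq_zero_of_le hrs hqp
  by_cases hbelow : ∃ w, b w < b p ∧ w ≠ r ∧ w ≠ s
  · obtain ⟨w, hw, hwr, hws⟩ := hbelow
    exact hf.apply_single_eq_zero_of_below hrs hw hwr hws hpr hqs
  by_cases habove : ∃ x, b q < b x ∧ x ≠ r ∧ x ≠ s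
  · obtain ⟨x, hx, hxr, hxs⟩ := habove
    exact hf.apply_single_eq_zero_of_above hrs hx hxr hxs hpr hqs (ne_of_apply_ne b hpq.ne)
  by_cases hin : b s < b p ∨ b r < b p ∧ b p < b s ∨ b q < b r ∨ b r < b q ∧ b q < b s
  · exact hf.apply_single_eq_zero_of_lt_or_between h2 hrs hpr hqs hpq hin
  push Not at hbelow habove hin
  have hblock : ∀ k, 1 ≤ k → k ≤ t → (k < b p ∨ b q < k) → b r = k ∨ b s = k :=
    fun k => hb.eq_or_eq_of_forall (P := fun k => k < b p ∨ b q < k)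
      fun w hw hwr => hw.elim (hbelow w · hwr) (habove w · hwr)
  have := hblock 1 le_rfl (by omega)
  have := hblock 2 (by omega) (by omega)
  have := hblock t (by omega) le_rfl
  have := hblock (t - 1) (by omega) (by omega)
  have := hb.one_le r
  have := hb.one_le p
  have := hb.le s
  have := hb.le q
  rcases (by omega : b p = b s ∨ b p ≤ b r ∧ b q = b r ∨ b p ≤ b r ∧ b s ≤ b q) with
    hps | hqr | hsq
  · refine absurd ⟨card_filter_eq_one_of_forall_eq (by omega : b r = 1) fun w hw => ?_,
      by omega, by omega, by omega, by omega⟩ hfirst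
    by_contra hwr
    have := congrArg b (hbelow w (by omega) hwr)
    omega
  · refine absurd ⟨card_filter_eq_one_of_forall_eq (by omega : b s = t) fun x hx => ?_,
      by omega, by omega, by omega, by omega⟩ hlast
    exact habove x (by omega) (ne_of_apply_ne b (by omega))
  · have := hcentral (by omega) (by omega)
    obtain ⟨m, hm⟩ := hb.exists_eq (b r + 1) (by omega) (by omega)
    exact hf.apply_single_eq_zero_of_between (show b r < b m by omega) (show b m < b s by omega)
      hpr (ne_of_apply_ne b (by omega)) hqs (ne_of_apply_ne b (by omega))

end IsDerN

section InnerMatrix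

variable (b) in
/-- The matrix `X` of the inner part `ad X` of `f`, for representatives `u`, `v` of the first and
last blocks. It is normalised by `X v v = 0`: columns outside the last block are read off from
column `v` of `f (E d v)`, columns inside it from row `u` of `f (E u d)`. -/
def innerMatrix (f : Matrix (Fin n) (Fin n) F →ₗ[F] Matrix (Fin n) (Fin n) F) (u v : Fin n) :
    Matrix (Fin n) (Fin n) F :=
  of fun a d =>
    if b d < b v then f (single d v 1) a v
    else if a = d then f (single u v 1) u v - f (single u d 1) u d
    else -f (single u a 1) u d

variable {f : Matrix (Fin n) (Fin n) F →ₗ[F] Matrix (Fin n) (Fin n) F} {t : ℕ} {u v : Fin n}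

theorem innerMatrix_apply (a d : Fin n) :
    innerMatrix b f u v a d =
      if b d < b v then f (single d v 1) a v
      else if a = d then f (single u v 1) u v - f (single u d 1) u d
      else -f (single u a 1) u d :=
  rfl

theorem IsDerN.innerMatrix_apply_eq_zero_of_lt (hf : IsDerN b f) (hub : ∀ r, b r ≤ t)
    (hv : b v = t) {a d : Fin n} (h : b d < b a) : innerMatrix b f u v a d = 0 := by
  have hdv : b d < b v := by have := hub a; omega
  rw [innerMatrix_apply, if_pos hdv]
  rcases (hub a).eq_or_lt with hat | hat
  · exact hf.apply_single_eq_zero_of_le hdv (by omega)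
  · rw [hf.apply_single_col_eq_neg hdv h (ne_of_apply_ne b (by omega)) (ne_of_apply_ne b (by omega))
      (ne_of_apply_ne b (by omega)), hf.apply_single_eq_zero_of_le h le_rfl, neg_zero]

theorem IsDerN.apply_single_diag_eq_innerMatrix (hf : IsDerN b f)
    (hb : IsBlockLabelling b t) (ht : 3 ≤ t) (hu : b u = 1) (hv : b v = t)
    {r s : Fin n} (hrs : b r < b s) :
    f (single r s 1) r s = innerMatrix b f u v r r - innerMatrix b f u v s s := by
  have hr : innerMatrix b f u v r r = f (single r v 1) r v := by
    rw [innerMatrix_apply, if_pos (by have := hb.le s; omega)]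
  rcases (hb.le s).eq_or_lt with hst | hst
  · rw [hr, innerMatrix_apply, if_neg (by omega), if_pos rfl]
    rcases (hb.one_le r).eq_or_lt with hr1 | hr1
    · obtain ⟨m, hm⟩ := hb.exists_eq 2 (by omega) (by omega)
      have e1 := hf.apply_single_diag_eq_add (show b r < b m by omega) (show b m < b s by omega)
      have e2 := hf.apply_single_diag_eq_add (show b r < b m by omega) (show b m < b v by omega)
      have e3 := hf.apply_single_diag_eq_add (show b u < b m by omega) (show b m < b s by omega)
      have e4 := hf.apply_single_diag_eq_add (show b u < b m by omega) (show b m < b v by omega)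
      linear_combination e1 - e2 + e4 - e3
    · have e1 := hf.apply_single_diag_eq_add (show b u < b r by omega) hrs
      have e2 := hf.apply_single_diag_eq_add (show b u < b r by omega) (show b r < b v by omega)
      linear_combination e2 - e1
  · rw [hr, innerMatrix_apply, if_pos (by omega)]
    linear_combination -hf.apply_single_diag_eq_add hrs (show b s < b v by omega)

theorem IsDerN.apply_single_row_eq_innerMatrix (hf : IsDerN b f)
    (hb : IsBlockLabelling b t) (ht : 3 ≤ t) (hu : b u = 1) (hv : b v = t)
    {r s q : Fin n} (hrs : b r < b s) (hqs : q ≠ s)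
    (hcentral : b r = 1 → b q = t → b r + 1 < b s) :
    f (single r s 1) r q = -innerMatrix b f u v s q := by
  rw [innerMatrix_apply]
  rcases (hb.le q).lt_or_eq with hq | hq
  · rw [if_pos (by omega)]
    rcases lt_or_ge (b r) (b q) with hrq | hqr
    · exact hf.apply_single_row_eq_neg hrs hrq hqs (by omega)
    · rw [hf.apply_single_eq_zero_of_le hrs hqr]
      rcases (hb.le s).lt_or_eq with hs | hs
      · rw [hf.apply_single_col_eq_neg (show b q < b v by omega) (show b q < b s by omega)
          (ne_of_apply_ne b (by omega)) (ne_of_apply_ne b (by omega)) (ne_of_apply_ne b (by omega)),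
          hf.apply_single_eq_zero_of_le (show b q < b s by omega) le_rfl, neg_zero, neg_zero]
      · rw [hf.apply_single_eq_zero_of_le (show b q < b v by omega) (by omega), neg_zero]
  · rw [if_neg (by omega), if_neg hqs.symm, neg_neg]
    rcases (hb.one_le r).eq_or_lt with hr1 | hr1
    · obtain ⟨m, hm⟩ := hb.exists_eq 2 (by omega) (by omega)
      rw [hf.apply_single_row_eq (show b r < b m by omega) (show b m < b s by omega) hqs,
        ← hf.apply_single_row_eq (show b u < b m by omega) (show b m < b s by omega) hqs]
    · exact (hf.apply_single_row_eq (show b u < b r by omega) hrs hqs).symm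

theorem IsDerN.apply_single_col_eq_innerMatrix (hf : IsDerN b f)
    (hb : IsBlockLabelling b t) (ht : 3 ≤ t) (hu : b u = 1) (hv : b v = t)
    {r s p : Fin n} (hrs : b r < b s) (hpr : p ≠ r)
    (hcentral : b p = 1 → b s = t → b r + 1 < b s) :
    f (single r s 1) p s = innerMatrix b f u v p r := by
  rw [innerMatrix_apply, if_pos (by have := hb.le s; omega)]
  rcases (hb.le s).lt_or_eq with hs | hs
  · exact (hf.apply_single_col_eq hrs (show b s < b v by omega) hpr).symm
  obtain rfl | hsv := eq_or_ne s v
  · rfl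
  rcases (hb.one_le p).eq_or_lt with hp1 | hp1
  · obtain ⟨m, hm⟩ := hb.exists_eq (t - 1) (by omega) (by omega)
    have hrm : b r < b m := by have := hcentral hp1.symm hs; omega
    rw [hf.apply_single_col_eq hrm (show b m < b s by omega) hpr,
      hf.apply_single_col_eq hrm (show b m < b v by omega) hpr]
  rcases lt_or_ge (b p) (b s) with hps | hsp
  · rw [hf.apply_single_col_eq_neg hrs (show b u < b p by omega) (ne_of_apply_ne b (by omega)) hpr
      (ne_of_apply_ne b (by omega)),
      hf.apply_single_col_eq_neg (show b r < b v by omega) (show b u < b p by omega)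
      (ne_of_apply_ne b (by omega)) hpr (ne_of_apply_ne b (by omega))]
  · rw [hf.apply_single_eq_zero_of_le hrs hsp,
      hf.apply_single_eq_zero_of_le (show b r < b v by omega) (by omega)]

end InnerMatrix

section BlockProj

variable (b) in
def blockIdempotent (i : ℕ) : Matrix (Fin n) (Fin n) F :=
  diagonal fun r => if b r = i then 1 else 0

variable (F b) in
def blockProj (i j : ℕ) : Matrix (Fin n) (Fin n) F →ₗ[F] Matrix (Fin n) (Fin n) F :=
  LinearMap.mulLeftRight F (blockIdempotent b i, blockIdempotent b j)

theorem blockProj_apply (i j : ℕ) (A : Matrix (Fin n) (Fin n) F) :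
    blockProj F b i j A = blockIdempotent b i * A * blockIdempotent b j :=
  LinearMap.mulLeftRight_apply _ _ _

theorem blockProj_apply_apply (i j : ℕ) (A : Matrix (Fin n) (Fin n) F) (p q : Fin n) :
    blockProj F b i j A p q = if b p = i ∧ b q = j then A p q else 0 := by
  simp only [blockProj_apply, blockIdempotent, diagonal_mul, mul_diagonal]
  split_ifs <;> simp_all

theorem blockIdempotent_mul_blockIdempotent {i j : ℕ} (hij : i ≠ j) :
    blockIdempotent b i * blockIdempotent b j = (0 : Matrix (Fin n) (Fin n) F) := by
  ext p q
  simp only [blockIdempotent, diagonal_mul_diagonal, diagonal_apply, Matrix.zero_apply]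
  split_ifs <;> simp_all

theorem inBlk_blockProj (i j : ℕ) (A : Matrix (Fin n) (Fin n) F) :
    InBlk b i j (blockProj F b i j A) :=
  fun p q h => by rw [blockProj_apply_apply, if_neg h]

theorem inN_blockProj {i j : ℕ} (hij : i < j) (A : Matrix (Fin n) (Fin n) F) :
    InN b (blockProj F b i j A) :=
  fun p q h => by rw [blockProj_apply_apply, if_neg (by omega)]

theorem blockProj_eq_zero_of_inBlk {i j k l : ℕ} (hne : ¬(k = i ∧ l = j))
    {A : Matrix (Fin n) (Fin n) F} (hA : InBlk b k l A) : blockProj F b i j A = 0 := by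
  ext p q
  rw [blockProj_apply_apply, Matrix.zero_apply]
  split_ifs with h
  · exact hA p q fun hkl => hne ⟨by omega, by omega⟩
  · rfl

theorem blockProj_single {i j : ℕ} {r s : Fin n} :
    blockProj F b i j (single r s 1) = if b r = i ∧ b s = j then single r s 1 else 0 := by
  ext p q
  rw [blockProj_apply_apply]
  by_cases hpq : r = p ∧ s = q
  · obtain ⟨rfl, rfl⟩ := hpq
    split_ifs <;> simp
  · split_ifs <;> simp [hpq]

theorem blockProj_mul_blockProj_of_ne {i j k l : ℕ} (hjk : j ≠ k) (A B : Matrix (Fin n) (Fin n) F) :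
    blockProj F b i j A * blockProj F b k l B = 0 := by
  simp only [blockProj_apply, ← mul_assoc]
  rw [mul_assoc (blockIdempotent b i * A), blockIdempotent_mul_blockIdempotent hjk]
  simp

theorem blockProj_mul_blockIdempotent_of_ne {i j k : ℕ} (hjk : j ≠ k)
    (A : Matrix (Fin n) (Fin n) F) :
    blockProj F b i j A * blockIdempotent b k = 0 := by
  rw [blockProj_apply, mul_assoc, blockIdempotent_mul_blockIdempotent hjk, mul_zero]

theorem blockIdempotent_mul_blockProj_of_ne {i j k : ℕ} (hki : k ≠ i)
    (A : Matrix (Fin n) (Fin n) F) :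
    blockIdempotent b k * blockProj F b i j A = 0 := by
  rw [blockProj_apply, ← mul_assoc, ← mul_assoc, blockIdempotent_mul_blockIdempotent hki,
    zero_mul, zero_mul]

namespace InN

variable {X Y : Matrix (Fin n) (Fin n) F}

theorem blockIdempotent_mul_eq_zero (hX : InN b X) {j : ℕ} (hj : ∀ r, b r ≤ j) :
    blockIdempotent b j * X = 0 := by
  ext p q
  rw [blockIdempotent, diagonal_mul, Matrix.zero_apply]
  split_ifs with h
  · rw [hX p q (h ▸ hj q), mul_zero]
  · rw [zero_mul]

theorem mul_blockIdempotent_eq_zero (hX : InN b X) {i : ℕ} (hi : ∀ r, i ≤ b r) :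
    X * blockIdempotent b i = 0 := by
  ext p q
  rw [blockIdempotent, mul_diagonal, Matrix.zero_apply]
  split_ifs with h
  · rw [hX p q (h ▸ hi p), zero_mul]
  · rw [mul_zero]

theorem mul_blockIdempotent_mul_eq_blockProj_mul (hX : InN b X) {i j : ℕ}
    (hij : ∀ r, b r < j → b r = i) (M : Matrix (Fin n) (Fin n) F) :
    X * (blockIdempotent b j * M) = blockProj F b i j X * M := by
  suffices X * blockIdempotent b j = blockIdempotent b i * X * blockIdempotent b j by
    rw [← mul_assoc, this, blockProj_apply]
  ext p q
  simp only [blockIdempotent, mul_diagonal, diagonal_mul]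
  by_cases hq : b q = j
  · by_cases hp : b p = i
    · simp [hp, hq]
    · simp [hp, hX p q (by have := hij p; omega)]
  · simp [hq]

theorem mul_blockIdempotent_mul_eq_mul_blockProj (hX : InN b X) {i j : ℕ}
    (hij : ∀ r, i < b r → b r = j) (M : Matrix (Fin n) (Fin n) F) :
    M * blockIdempotent b i * X = M * blockProj F b i j X := by
  suffices blockIdempotent b i * X = blockIdempotent b i * X * blockIdempotent b j by
    rw [mul_assoc, this, blockProj_apply]
  ext p q
  simp only [blockIdempotent, mul_diagonal, diagonal_mul]
  by_cases hp : b p = i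
  · by_cases hq : b q = j
    · simp [hp, hq]
    · simp [hp, hq, hX p q (by have := hij q; omega)]
  · simp [hp]

theorem blockProj_mul_eq_zero (hX : InN b X) (hY : InN b Y) {i j : ℕ} (hij : j ≤ i + 1) :
    blockProj F b i j (X * Y) = 0 := by
  ext p q
  rw [blockProj_apply_apply, Matrix.zero_apply]
  split_ifs with h
  · rw [mul_apply]
    refine Finset.sum_eq_zero fun k _ => ?_
    rcases le_or_gt (b k) (b p) with hk | hk
    · rw [hX p k hk, zero_mul]
    · rw [hY k q (by omega), mul_zero]
  · rfl

end InN

end BlockProj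

section BlockComponent

variable (b) in
def blockComponent (f : Matrix (Fin n) (Fin n) F →ₗ[F] Matrix (Fin n) (Fin n) F) (i j k l : ℕ) :
    Matrix (Fin n) (Fin n) F →ₗ[F] Matrix (Fin n) (Fin n) F :=
  blockProj F b k l ∘ₗ f ∘ₗ blockProj F b i j

variable {f : Matrix (Fin n) (Fin n) F →ₗ[F] Matrix (Fin n) (Fin n) F} {t : ℕ}

theorem blockComponent_apply (i j k l : ℕ) (A : Matrix (Fin n) (Fin n) F) :
    blockComponent b f i j k l A =
      blockIdempotent b k * f (blockProj F b i j A) * blockIdempotent b l := by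
  rw [blockComponent, LinearMap.comp_apply, LinearMap.comp_apply, blockProj_apply]

theorem isDerN_zero : IsDerN b (0 : Matrix (Fin n) (Fin n) F →ₗ[F] Matrix (Fin n) (Fin n) F) :=
  ⟨fun _ _ _ _ _ => rfl, fun _ _ _ _ => by simp⟩

-- The `(1, 2)` blocks `X'`, `Y'` of `X`, `Y` commute; the derivation identity for `X'`, `Y'`,
-- multiplied on the right by the idempotent of block `t`, is the one required.
theorem isDerN_blockComponent_first (hf : IsDerN b f) (hlb : ∀ r, 1 ≤ b r) (hub : ∀ r, b r ≤ t)
    (ht : 2 < t) : IsDerN b (blockComponent b f 1 2 2 t) := by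
  refine ⟨fun A _ => inN_blockProj ht _, fun X Y hX hY => ?_⟩
  have hlow : ∀ r, b r < 2 → b r = 1 := fun r hr => by have := hlb r; omega
  have h := congrArg (· * blockIdempotent b t)
    (hf.2 _ _ (inN_blockProj one_lt_two X) (inN_blockProj one_lt_two Y))
  simp only [blockComponent_apply, map_sub, hX.blockProj_mul_eq_zero hY le_rfl,
    hY.blockProj_mul_eq_zero hX le_rfl, blockProj_mul_blockProj_of_ne (by omega : (2 : ℕ) ≠ 1),
    sub_zero, map_zero, mul_zero, zero_mul, sub_mul, add_mul, mul_assoc,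
    blockProj_mul_blockIdempotent_of_ne ht.ne, hX.blockIdempotent_mul_eq_zero hub,
    hY.blockIdempotent_mul_eq_zero hub, hX.mul_blockIdempotent_mul_eq_blockProj_mul hlow,
    hY.mul_blockIdempotent_mul_eq_blockProj_mul hlow] at h ⊢
  exact h

theorem isDerN_blockComponent_last (hf : IsDerN b f) (hlb : ∀ r, 1 ≤ b r) (hub : ∀ r, b r ≤ t)
    (ht : 2 < t) : IsDerN b (blockComponent b f (t - 1) t 1 (t - 1)) := by
  refine ⟨fun A _ => inN_blockProj (by omega) _, fun X Y hX hY => ?_⟩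
  have hhigh : ∀ r, t - 1 < b r → b r = t := fun r hr => by have := hub r; omega
  have h := congrArg (blockIdempotent b 1 * ·)
    (hf.2 _ _ (inN_blockProj (by omega : t - 1 < t) X) (inN_blockProj (by omega : t - 1 < t) Y))
  simp only [blockComponent_apply, map_sub,
    hX.blockProj_mul_eq_zero hY (i := t - 1) (j := t) (by omega),
    hY.blockProj_mul_eq_zero hX (i := t - 1) (j := t) (by omega),
    blockProj_mul_blockProj_of_ne (by omega : t ≠ t - 1),
    sub_zero, map_zero, mul_zero, zero_mul, mul_sub, mul_add, ← mul_assoc,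
    blockIdempotent_mul_blockProj_of_ne (by omega : 1 ≠ t - 1), hX.mul_blockIdempotent_eq_zero hlb,
    hY.mul_blockIdempotent_eq_zero hlb, hX.mul_blockIdempotent_mul_eq_mul_blockProj hhigh,
    hY.mul_blockIdempotent_mul_eq_mul_blockProj hhigh] at h ⊢
  exact h

end BlockComponent

theorem LinearMap.apply_apply_eq_zero_of_single {ι R : Type*} [Fintype ι] [DecidableEq ι]
    [CommSemiring R] (g : Matrix ι ι R →ₗ[R] Matrix ι ι R) {A : Matrix ι ι R} {p q : ι}
    (h : ∀ r s, A r s ≠ 0 → g (Matrix.single r s 1) p q = 0) : g A p q = 0 := by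
  rw [matrix_eq_sum_single A, map_sum, Matrix.sum_apply]
  refine Finset.sum_eq_zero fun r _ => ?_
  rw [map_sum, Matrix.sum_apply]
  refine Finset.sum_eq_zero fun s _ => ?_
  by_cases hA : A r s = 0
  · simp [hA]
  · rw [← mul_one (A r s), ← smul_eq_mul, ← smul_single, map_smul, Matrix.smul_apply, h r s hA,
      smul_zero]

section Extremal

variable {f : Matrix (Fin n) (Fin n) F →ₗ[F] Matrix (Fin n) (Fin n) F} {t : ℕ}

theorem blockComponent_single_apply (i j k l : ℕ) (r s p q : Fin n) :
    blockComponent b f i j k l (single r s 1) p q =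
      if b r = i ∧ b s = j ∧ b p = k ∧ b q = l then f (single r s 1) p q else 0 := by
  rw [blockComponent, LinearMap.comp_apply, LinearMap.comp_apply, blockProj_apply_apply,
    blockProj_single]
  split_ifs <;> simp_all

variable (b t) in
def firstBlockDerivation (f : Matrix (Fin n) (Fin n) F →ₗ[F] Matrix (Fin n) (Fin n) F) :
    Matrix (Fin n) (Fin n) F →ₗ[F] Matrix (Fin n) (Fin n) F :=
  if (Finset.univ.filter fun r => b r = 1).card = 1 then blockComponent b f 1 2 2 t else 0

variable (b t) in
def lastBlockDerivation (f : Matrix (Fin n) (Fin n) F →ₗ[F] Matrix (Fin n) (Fin n) F) :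
    Matrix (Fin n) (Fin n) F →ₗ[F] Matrix (Fin n) (Fin n) F :=
  if (Finset.univ.filter fun s => b s = t).card = 1 then blockComponent b f (t - 1) t 1 (t - 1)
  else 0

theorem firstBlockDerivation_single_apply (r s p q : Fin n) :
    firstBlockDerivation b t f (single r s 1) p q =
      if (Finset.univ.filter fun x => b x = 1).card = 1 ∧ b r = 1 ∧ b s = 2 ∧ b p = 2 ∧ b q = t
      then f (single r s 1) p q else 0 := by
  unfold firstBlockDerivation
  split_ifs <;> simp_all [blockComponent_single_apply]

theorem lastBlockDerivation_single_apply (r s p q : Fin n) :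
    lastBlockDerivation b t f (single r s 1) p q =
      if (Finset.univ.filter fun x => b x = t).card = 1 ∧ b r = t - 1 ∧ b s = t ∧ b p = 1 ∧
        b q = t - 1
      then f (single r s 1) p q else 0 := by
  unfold lastBlockDerivation
  split_ifs <;> simp_all [blockComponent_single_apply]

theorem firstBlockDerivation_single_apply_eq_zero (ht : 2 < t) {r s p q : Fin n}
    (h : p = r ∨ q = s) :
    firstBlockDerivation b t f (single r s 1) p q = 0 := by
  rw [firstBlockDerivation_single_apply, if_neg]
  rintro ⟨-, h1, h2, h3, h4⟩
  rcases h with rfl | rfl <;> omega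

theorem lastBlockDerivation_single_apply_eq_zero (ht : 2 < t) {r s p q : Fin n}
    (h : p = r ∨ q = s) :
    lastBlockDerivation b t f (single r s 1) p q = 0 := by
  rw [lastBlockDerivation_single_apply, if_neg]
  rintro ⟨-, h1, h2, h3, h4⟩
  rcases h with rfl | rfl <;> omega

theorem isDerN_firstBlockDerivation (hf : IsDerN b f) (hlb : ∀ r, 1 ≤ b r)
    (hub : ∀ r, b r ≤ t) (ht : 2 < t) : IsDerN b (firstBlockDerivation b t f) := by
  unfold firstBlockDerivation
  split_ifs
  exacts [isDerN_blockComponent_first hf hlb hub ht, isDerN_zero]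

theorem isDerN_lastBlockDerivation (hf : IsDerN b f) (hlb : ∀ r, 1 ≤ b r)
    (hub : ∀ r, b r ≤ t) (ht : 2 < t) : IsDerN b (lastBlockDerivation b t f) := by
  unfold lastBlockDerivation
  split_ifs
  exacts [isDerN_blockComponent_last hf hlb hub ht, isDerN_zero]

theorem inBlk_firstBlockDerivation (A : Matrix (Fin n) (Fin n) F) :
    InBlk b 2 t (firstBlockDerivation b t f A) := by
  unfold firstBlockDerivation
  split_ifs
  exacts [inBlk_blockProj _ _ _, fun _ _ _ => rfl]

theorem inBlk_lastBlockDerivation (A : Matrix (Fin n) (Fin n) F) :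
    InBlk b 1 (t - 1) (lastBlockDerivation b t f A) := by
  unfold lastBlockDerivation
  split_ifs
  exacts [inBlk_blockProj _ _ _, fun _ _ _ => rfl]

theorem firstBlockDerivation_eq_zero_of_inBlk {i j : ℕ} (hij : ¬(i = 1 ∧ j = 2))
    {A : Matrix (Fin n) (Fin n) F} (hA : InBlk b i j A) : firstBlockDerivation b t f A = 0 := by
  unfold firstBlockDerivation
  split_ifs
  · rw [blockComponent, LinearMap.comp_apply, LinearMap.comp_apply,
      blockProj_eq_zero_of_inBlk hij hA, map_zero, map_zero]
  · rfl

theorem lastBlockDerivation_eq_zero_of_inBlk {i j : ℕ} (hij : ¬(i = t - 1 ∧ j = t))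
    {A : Matrix (Fin n) (Fin n) F} (hA : InBlk b i j A) : lastBlockDerivation b t f A = 0 := by
  unfold lastBlockDerivation
  split_ifs
  · rw [blockComponent, LinearMap.comp_apply, LinearMap.comp_apply,
      blockProj_eq_zero_of_inBlk hij hA, map_zero, map_zero]
  · rfl

end Extremal

theorem IsDerN.apply_single_eq_ad_add {f : Matrix (Fin n) (Fin n) F →ₗ[F] Matrix (Fin n) (Fin n) F}
    {t : ℕ} (hf : IsDerN b f) (hb : IsBlockLabelling b t) (ht : 3 ≤ t) (h2 : (2 : F) ≠ 0)
    {u v : Fin n} (hu : b u = 1) (hv : b v = t)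
    {r s p q : Fin n} (hrs : b r < b s)
    (hcentral : b p = 1 → b q = t → b r + 1 < b s) :
    f (single r s 1) p q =
      (innerMatrix b f u v * single r s 1 - single r s 1 * innerMatrix b f u v :
        Matrix (Fin n) (Fin n) F) p q
        + firstBlockDerivation b t f (single r s 1) p q
        + lastBlockDerivation b t f (single r s 1) p q := by
  rw [Matrix.sub_apply, mul_single_one_apply, single_one_mul_apply]
  by_cases hdiag : p = r ∨ q = s
  · rw [firstBlockDerivation_single_apply_eq_zero (by omega) hdiag,
      lastBlockDerivation_single_apply_eq_zero (by omega) hdiag, add_zero, add_zero]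
    obtain rfl | hpr := eq_or_ne p r
    · obtain rfl | hqs := eq_or_ne q s
      · rw [if_pos rfl, if_pos rfl, hf.apply_single_diag_eq_innerMatrix hb ht hu hv hrs]
      · rw [if_neg hqs, if_pos rfl, hf.apply_single_row_eq_innerMatrix hb ht hu hv hrs hqs hcentral]
        ring
    · obtain rfl := hdiag.resolve_left hpr
      rw [if_pos rfl, if_neg hpr, hf.apply_single_col_eq_innerMatrix hb ht hu hv hrs hpr hcentral]
      ring
  push Not at hdiag
  obtain ⟨hpr, hqs⟩ := hdiag
  rw [if_neg hqs, if_neg hpr, firstBlockDerivation_single_apply, lastBlockDerivation_single_apply]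
  by_cases hfirst : (Finset.univ.filter fun x => b x = 1).card = 1 ∧
      b r = 1 ∧ b s = 2 ∧ b p = 2 ∧ b q = t
  · rw [if_pos hfirst, if_neg (by omega)]
    ring
  by_cases hlast : (Finset.univ.filter fun x => b x = t).card = 1 ∧
      b r = t - 1 ∧ b s = t ∧ b p = 1 ∧ b q = t - 1
  · rw [if_pos hlast, if_neg hfirst]
    ring
  rw [if_neg hfirst, if_neg hlast,
    hf.apply_single_eq_zero_of_ne hb ht h2 hrs hpr hqs hcentral hfirst hlast]
  ring

variable (b t) in
def centralPart (f : Matrix (Fin n) (Fin n) F →ₗ[F] Matrix (Fin n) (Fin n) F) (u v : Fin n) :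
    Matrix (Fin n) (Fin n) F →ₗ[F] Matrix (Fin n) (Fin n) F :=
  f - (LinearMap.mulLeft F (innerMatrix b f u v) - LinearMap.mulRight F (innerMatrix b f u v)) -
    firstBlockDerivation b t f - lastBlockDerivation b t f

section CentralPart

variable {f : Matrix (Fin n) (Fin n) F →ₗ[F] Matrix (Fin n) (Fin n) F} {t : ℕ} {u v : Fin n}

theorem centralPart_apply (A : Matrix (Fin n) (Fin n) F) :
    centralPart b t f u v A =
      f A - (innerMatrix b f u v * A - A * innerMatrix b f u v) - firstBlockDerivation b t f A -
        lastBlockDerivation b t f A := by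
  simp only [centralPart, LinearMap.sub_apply, LinearMap.mulLeft_apply, LinearMap.mulRight_apply]

theorem IsDerN.centralPart_single_apply_eq_zero (hf : IsDerN b f) (hb : IsBlockLabelling b t)
    (ht : 3 ≤ t) (h2 : (2 : F) ≠ 0) (hu : b u = 1) (hv : b v = t) {r s p q : Fin n}
    (hrs : b r < b s) (hcentral : b p = 1 → b q = t → b r + 1 < b s) :
    centralPart b t f u v (single r s 1) p q = 0 := by
  rw [centralPart_apply, Matrix.sub_apply, Matrix.sub_apply, Matrix.sub_apply,
    hf.apply_single_eq_ad_add hb ht h2 hu hv hrs hcentral]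
  ring

theorem IsDerN.inBlk_centralPart (hf : IsDerN b f) (hb : IsBlockLabelling b t) (ht : 3 ≤ t)
    (h2 : (2 : F) ≠ 0) (hu : b u = 1) (hv : b v = t) {A : Matrix (Fin n) (Fin n) F}
    (hA : InN b A) : InBlk b 1 t (centralPart b t f u v A) := by
  intro p q hpq
  refine LinearMap.apply_apply_eq_zero_of_single _ fun r s hrs => ?_
  refine hf.centralPart_single_apply_eq_zero hb ht h2 hu hv ?_ fun hp hq => absurd ⟨hp, hq⟩ hpq
  by_contra h
  exact hrs (hA r s (not_lt.mp h))

theorem IsDerN.centralPart_eq_zero_of_inBlk (hf : IsDerN b f) (hb : IsBlockLabelling b t)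
    (ht : 3 ≤ t) (h2 : (2 : F) ≠ 0) (hu : b u = 1) (hv : b v = t) {i j : ℕ} (hij : i + 1 < j)
    {A : Matrix (Fin n) (Fin n) F} (hA : InBlk b i j A) : centralPart b t f u v A = 0 := by
  ext p q
  refine LinearMap.apply_apply_eq_zero_of_single _ fun r s hrs => ?_
  have hblk : b r = i ∧ b s = j := by
    by_contra h
    exact hrs (hA r s h)
  exact hf.centralPart_single_apply_eq_zero hb ht h2 hu hv (by omega) fun _ _ => by omega

end CentralPart

end BlockDerivations

theorem stmt15_general {F : Type*} [Field F] {n t : ℕ} (b : Fin n → ℕ)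
    (ht : 3 ≤ t)
    (hlb : ∀ r, 1 ≤ b r) (hub : ∀ r, b r ≤ t)
    (hsurj : ∀ k, 1 ≤ k → k ≤ t → ∃ r, b r = k)
    (hchar : ringChar F ≠ 2)
    (f : Matrix (Fin n) (Fin n) F →ₗ[F] Matrix (Fin n) (Fin n) F)
    (hf : IsDerN b f) :
    ∃ (X : Matrix (Fin n) (Fin n) F)
      (φ φ₁ φ₂ : Matrix (Fin n) (Fin n) F →ₗ[F] Matrix (Fin n) (Fin n) F),
      (∀ r s, b s < b r → X r s = 0) ∧
      (∀ A, InN b A → InBlk b 1 t (φ A)) ∧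
      (∀ i j, i + 1 < j → ∀ A, InBlk b i j A → φ A = 0) ∧
      IsDerN b φ₁ ∧
      (∀ A, InBlk b 1 2 A → InBlk b 2 t (φ₁ A)) ∧
      (∀ i j, 1 ≤ i → i < j → j ≤ t → ¬(i = 1 ∧ j = 2) →
        ∀ A, InBlk b i j A → φ₁ A = 0) ∧
      ((Finset.univ.filter fun r => b r = 1).card ≠ 1 →
        ∀ A, InN b A → φ₁ A = 0) ∧
      IsDerN b φ₂ ∧
      (∀ A, InBlk b (t - 1) t A → InBlk b 1 (t - 1) (φ₂ A)) ∧
      (∀ i j, 1 ≤ i → i < j → j ≤ t → ¬(i = t - 1 ∧ j = t) →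
        ∀ A, InBlk b i j A → φ₂ A = 0) ∧
      ((Finset.univ.filter fun s => b s = t).card ≠ 1 →
        ∀ A, InN b A → φ₂ A = 0) ∧
      (∀ A, InN b A → f A = X * A - A * X + φ A + φ₁ A + φ₂ A) := by
  have hb : IsBlockLabelling b t := ⟨hlb, hub, hsurj⟩
  have h2 : (2 : F) ≠ 0 := Ring.two_ne_zero hchar
  obtain ⟨u, hu⟩ := hsurj 1 le_rfl (by omega)
  obtain ⟨v, hv⟩ := hsurj t (by omega) le_rfl
  refine ⟨innerMatrix b f u v, centralPart b t f u v, firstBlockDerivation b t f,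
    lastBlockDerivation b t f, fun r s h => hf.innerMatrix_apply_eq_zero_of_lt hub hv h,
    fun A hA => hf.inBlk_centralPart hb ht h2 hu hv hA,
    fun i j hij A hA => hf.centralPart_eq_zero_of_inBlk hb ht h2 hu hv hij hA,
    isDerN_firstBlockDerivation hf hlb hub ht, fun A _ => inBlk_firstBlockDerivation A,
    fun i j _ _ _ hij A hA => firstBlockDerivation_eq_zero_of_inBlk hij hA,
    fun hc A _ => by simp [firstBlockDerivation, hc],
    isDerN_lastBlockDerivation hf hlb hub ht, fun A _ => inBlk_lastBlockDerivation A,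
    fun i j _ _ _ hij A hA => lastBlockDerivation_eq_zero_of_inBlk hij hA,
    fun hc A _ => by simp [lastBlockDerivation, hc], fun A _ => ?_⟩
  rw [centralPart_apply]
  abel

/-- Theorem for char ≠ 2: every derivation `f` of `N` decomposes as
`f = ad X + φ + φ₁ + φ₂` with `X` block upper triangular, `φ` a linear map into the center
block `N^{1t}` vanishing on all `N^{ij}` with `j > i+1`, `φ₁` a derivation supported on
`N^{12}` with values in `N^{2t}` (zero unless block 1 is a single index), and `φ₂` a
derivation supported on `N^{t-1,t}` with values in `N^{1,t-1}` (zero unless block `t` is a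
single index). -/
theorem stmt15 {F : Type*} [Field F] {n t : ℕ} (b : Fin n → ℕ)
    (hn : 1 ≤ n) (ht : 3 ≤ t) (hmono : Monotone b)
    (hlb : ∀ r, 1 ≤ b r) (hub : ∀ r, b r ≤ t)
    (hsurj : ∀ k, 1 ≤ k → k ≤ t → ∃ r, b r = k)
    (hchar : ringChar F ≠ 2)
    (f : Matrix (Fin n) (Fin n) F →ₗ[F] Matrix (Fin n) (Fin n) F)
    (hf : IsDerN b f) :
    ∃ (X : Matrix (Fin n) (Fin n) F)
      (φ φ₁ φ₂ : Matrix (Fin n) (Fin n) F →ₗ[F] Matrix (Fin n) (Fin n) F),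
      (∀ r s, b s < b r → X r s = 0) ∧
      (∀ A, InN b A → InBlk b 1 t (φ A)) ∧
      (∀ i j, i + 1 < j → ∀ A, InBlk b i j A → φ A = 0) ∧
      IsDerN b φ₁ ∧
      (∀ A, InBlk b 1 2 A → InBlk b 2 t (φ₁ A)) ∧
      (∀ i j, 1 ≤ i → i < j → j ≤ t → ¬(i = 1 ∧ j = 2) →
        ∀ A, InBlk b i j A → φ₁ A = 0) ∧
      ((Finset.univ.filter fun r => b r = 1).card ≠ 1 →
        ∀ A, InN b A → φ₁ A = 0) ∧
      IsDerN b φ₂ ∧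
      (∀ A, InBlk b (t - 1) t A → InBlk b 1 (t - 1) (φ₂ A)) ∧
      (∀ i j, 1 ≤ i → i < j → j ≤ t → ¬(i = t - 1 ∧ j = t) →
        ∀ A, InBlk b i j A → φ₂ A = 0) ∧
      ((Finset.univ.filter fun s => b s = t).card ≠ 1 →
        ∀ A, InN b A → φ₂ A = 0) ∧
      (∀ A, InN b A → f A = X * A - A * X + φ A + φ₁ A + φ₂ A) :=
  stmt15_general b ht hlb hub hsurj hchar f hf
end
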